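/- Let g = Σ_k g_k u^k be an integer Laurent polynomial in two variables with Σ_k g_k = 0. Define P_+(n) = Π_{k: g_k > 0} ‖n-k‖^{2g_k} and P_-(n) = Π_{k: g_k < 0} ‖n-k‖^{2|g_k|}, which are polynomials in (n_1, n_2) of equal degree M_g = 2Σ_{g_k>0} g_k. If the degree m_g of P_+ - P_- satisfies M_g - m_g ≥ 3, then the convolution g·ω with ω_0 = 0, ω_n = log‖n‖ for n ≠ 0 is absolutely summable over Z^2. -/

import Mathlib

open MvPolynomial

/-- The Euclidean norm of a lattice point `n ∈ ℤ²`. -/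
noncomputable def enorm (n : Fin 2 → ℤ) : ℝ :=
  Real.sqrt (∑ i, ((n i : ℝ)) ^ 2)

/-- The convolution `(g·ω)ₙ = ∑ₖ gₖ ω_{n-k}`. -/
noncomputable def conv (g : (Fin 2 → ℤ) →₀ ℤ) (ω : (Fin 2 → ℤ) → ℝ)
    (n : Fin 2 → ℤ) : ℝ :=
  ∑ k ∈ g.support, (g k : ℝ) * ω (n - k)

/-- `P₊ = ∏_{k : g_k > 0} ((n₁-k₁)² + (n₂-k₂)²)^{g_k}` as a polynomial in `(n₁,n₂)`. -/
noncomputable def Pplus (g : (Fin 2 → ℤ) →₀ ℤ) : MvPolynomial (Fin 2) ℤ :=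
  ∏ k ∈ g.support.filter (fun k => 0 < g k),
    ((X 0 - C (k 0)) ^ 2 + (X 1 - C (k 1)) ^ 2) ^ (g k).toNat

/-- `P₋ = ∏_{k : g_k < 0} ((n₁-k₁)² + (n₂-k₂)²)^{|g_k|}`. -/
noncomputable def Pminus (g : (Fin 2 → ℤ) →₀ ℤ) : MvPolynomial (Fin 2) ℤ :=
  ∏ k ∈ g.support.filter (fun k => g k < 0),
    ((X 0 - C (k 0)) ^ 2 + (X 1 - C (k 1)) ^ 2) ^ (-g k).toNat

namespace Stmt4Aux

noncomputable def vE (n : Fin 2 → ℤ) : EuclideanSpace ℝ (Fin 2) := WithLp.toLp 2 (fun i => (n i : ℝ))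

lemma enorm_eq_norm (n : Fin 2 → ℤ) : _root_.enorm n = ‖vE n‖ := by
  rw [EuclideanSpace.norm_eq]
  simp [_root_.enorm, vE, Real.norm_eq_abs, sq_abs]

lemma enorm_nonneg (n : Fin 2 → ℤ) : 0 ≤ _root_.enorm n := Real.sqrt_nonneg _

lemma enorm_sub_ge (n k : Fin 2 → ℤ) : _root_.enorm n - _root_.enorm k ≤ _root_.enorm (n - k) := by
  have h : vE (n - k) = vE n - vE k := by
    ext i; simp [vE]
  rw [enorm_eq_norm, enorm_eq_norm, enorm_eq_norm, h]
  exact norm_sub_norm_le _ _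

lemma abs_le_enorm (n : Fin 2 → ℤ) (i : Fin 2) : |(n i : ℝ)| ≤ _root_.enorm n := by
  rw [← Real.sqrt_sq_eq_abs]
  apply Real.sqrt_le_sqrt
  have := Finset.single_le_sum (f := fun j => ((n j : ℝ)) ^ 2)
    (fun j _ => sq_nonneg _) (Finset.mem_univ i)
  simpa [_root_.enorm] using this

lemma enorm_sq (n : Fin 2 → ℤ) : _root_.enorm n ^ 2 = ((n 0 : ℝ)) ^ 2 + ((n 1 : ℝ)) ^ 2 := by
  rw [_root_.enorm, Real.sq_sqrt (by positivity), Fin.sum_univ_two]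

lemma abs_log_sub_log_le {y z : ℝ} (hy : 0 < y) (hz : |z| ≤ y / 2) :
    |Real.log (y + z) - Real.log y| ≤ 2 * |z| / y := by
  obtain ⟨hz1, hz2⟩ := abs_le.mp hz
  have hyz : 0 < y + z := by linarith
  rw [← Real.log_div hyz.ne' hy.ne', abs_le]
  constructor
  · have h := Real.log_le_sub_one_of_pos (x := y / (y + z)) (by positivity)
    have hlog : Real.log (y / (y + z)) = -Real.log ((y + z) / y) := by
      rw [← Real.log_inv]; congr 1; field_simp
    rw [hlog] at h
    have he : y / (y + z) - 1 = -z / (y + z) := by field_simp; ring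
    rw [he] at h
    have h2 : -z / (y + z) ≤ 2 * |z| / y := by
      rw [div_le_div_iff₀ hyz hy]
      nlinarith [mul_nonneg (abs_nonneg z) (by linarith : (0:ℝ) ≤ y + 2 * z),
        mul_le_mul_of_nonneg_right (neg_le_abs z) hy.le]
    linarith
  · have h := Real.log_le_sub_one_of_pos (x := (y + z) / y) (by positivity)
    have he : (y + z) / y - 1 = z / y := by field_simp; ring
    rw [he] at h
    have h2 : z / y ≤ 2 * |z| / y := by
      have : z ≤ 2 * |z| := by nlinarith [le_abs_self z, abs_nonneg z]
      gcongr
    linarith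

lemma eval_Pplus (g : (Fin 2 → ℤ) →₀ ℤ) (n : Fin 2 → ℤ) :
    ((eval n (Pplus g) : ℤ) : ℝ) =
      ∏ k ∈ g.support.filter (fun k => 0 < g k),
        (_root_.enorm (n - k) ^ 2) ^ (g k).toNat := by
  rw [Pplus]
  simp only [map_prod, map_pow, map_add, map_sub, eval_X, eval_C]
  push_cast
  refine Finset.prod_congr rfl fun k _ => ?_
  congr 1
  rw [enorm_sq]
  simp only [Pi.sub_apply]
  push_cast
  ring

lemma eval_Pminus (g : (Fin 2 → ℤ) →₀ ℤ) (n : Fin 2 → ℤ) :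
    ((eval n (Pminus g) : ℤ) : ℝ) =
      ∏ k ∈ g.support.filter (fun k => g k < 0),
        (_root_.enorm (n - k) ^ 2) ^ (-g k).toNat := by
  rw [Pminus]
  simp only [map_prod, map_pow, map_add, map_sub, eval_X, eval_C]
  push_cast
  refine Finset.prod_congr rfl fun k _ => ?_
  congr 1
  rw [enorm_sq]
  simp only [Pi.sub_apply]
  push_cast
  ring

lemma eval_abs_le (p : MvPolynomial (Fin 2) ℤ) (n : Fin 2 → ℤ) (hn : 1 ≤ _root_.enorm n) :
    |((eval n p : ℤ) : ℝ)| ≤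
      (∑ d ∈ p.support, |((coeff d p : ℤ) : ℝ)|) * _root_.enorm n ^ p.totalDegree := by
  rw [eval_eq]
  push_cast
  refine (Finset.abs_sum_le_sum_abs _ _).trans ?_
  rw [Finset.sum_mul]
  refine Finset.sum_le_sum fun d hd => ?_
  rw [abs_mul]
  apply mul_le_mul_of_nonneg_left _ (abs_nonneg _)
  calc |∏ i ∈ d.support, ((n i : ℝ)) ^ d i|
      ≤ ∏ i ∈ d.support, |(n i : ℝ)| ^ d i := by
        rw [Finset.abs_prod]
        exact Finset.prod_le_prod (fun _ _ => abs_nonneg _) (fun i _ => by rw [abs_pow])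
    _ ≤ ∏ i ∈ d.support, _root_.enorm n ^ d i := by
        refine Finset.prod_le_prod (fun _ _ => by positivity) (fun i _ => ?_)
        exact pow_le_pow_left₀ (abs_nonneg _) (abs_le_enorm n i) _
    _ = _root_.enorm n ^ (d.sum fun _ e => e) := by
        rw [Finsupp.sum, Finset.prod_pow_eq_pow_sum]
    _ ≤ _root_.enorm n ^ p.totalDegree := by
        apply pow_le_pow_right₀ hn (le_totalDegree hd)

lemma log_eval_Pplus (g : (Fin 2 → ℤ) →₀ ℤ) (n : Fin 2 → ℤ)
    (hpos : ∀ k ∈ g.support, 0 < _root_.enorm (n - k)) :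
    Real.log ((eval n (Pplus g) : ℤ) : ℝ) =
      ∑ k ∈ g.support.filter (fun k => 0 < g k),
        2 * (g k : ℝ) * Real.log (_root_.enorm (n - k)) := by
  rw [eval_Pplus, Real.log_prod]
  · refine Finset.sum_congr rfl fun k hk => ?_
    obtain ⟨hks, hkp⟩ := Finset.mem_filter.mp hk
    have hc : (((g k).toNat : ℕ) : ℝ) = (g k : ℝ) := by
      exact_mod_cast congrArg (fun z : ℤ => (z : ℝ)) (Int.toNat_of_nonneg hkp.le)
    rw [Real.log_pow, Real.log_pow, hc]
    ring
  · intro k hk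
    have h := hpos k (Finset.mem_filter.mp hk).1
    exact pow_ne_zero _ (by positivity)

lemma log_eval_Pminus (g : (Fin 2 → ℤ) →₀ ℤ) (n : Fin 2 → ℤ)
    (hpos : ∀ k ∈ g.support, 0 < _root_.enorm (n - k)) :
    Real.log ((eval n (Pminus g) : ℤ) : ℝ) =
      ∑ k ∈ g.support.filter (fun k => g k < 0),
        (-2) * (g k : ℝ) * Real.log (_root_.enorm (n - k)) := by
  rw [eval_Pminus, Real.log_prod]
  · refine Finset.sum_congr rfl fun k hk => ?_
    obtain ⟨hks, hkp⟩ := Finset.mem_filter.mp hk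
    have hc : (((-g k).toNat : ℕ) : ℝ) = -(g k : ℝ) := by
      have := congrArg (fun z : ℤ => (z : ℝ)) (Int.toNat_of_nonneg (by omega : (0:ℤ) ≤ -g k))
      push_cast at this ⊢
      linarith
    rw [Real.log_pow, Real.log_pow, hc]
    ring
  · intro k hk
    have h := hpos k (Finset.mem_filter.mp hk).1
    exact pow_ne_zero _ (by positivity)

lemma filter_not_pos (g : (Fin 2 → ℤ) →₀ ℤ) :
    g.support.filter (fun k => ¬0 < g k) = g.support.filter (fun k => g k < 0) := by
  ext k
  simp only [Finset.mem_filter, Finsupp.mem_support_iff]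
  constructor <;> (rintro ⟨h1, h2⟩; exact ⟨h1, by omega⟩)

lemma conv_eq (g : (Fin 2 → ℤ) →₀ ℤ) (n : Fin 2 → ℤ)
    (hpos : ∀ k ∈ g.support, 0 < _root_.enorm (n - k)) :
    conv g (fun m => if m = 0 then 0 else Real.log (_root_.enorm m)) n =
      (Real.log ((eval n (Pplus g) : ℤ) : ℝ) -
        Real.log ((eval n (Pminus g) : ℤ) : ℝ)) / 2 := by
  have hne : ∀ k ∈ g.support, ¬(n - k = (0 : Fin 2 → ℤ)) := by
    intro k hk h0
    have h := hpos k hk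
    rw [h0] at h
    simp [_root_.enorm] at h
  rw [conv, Finset.sum_congr rfl (fun k hk => by rw [if_neg (hne k hk)])]
  have hsplit := Finset.sum_filter_add_sum_filter_not g.support (fun k => 0 < g k)
      (fun k => (g k : ℝ) * Real.log (_root_.enorm (n - k)))
  rw [filter_not_pos] at hsplit
  rw [← hsplit, log_eval_Pplus g n hpos, log_eval_Pminus g n hpos]
  have e1 : ∑ k ∈ g.support.filter (fun k => 0 < g k),
      2 * (g k : ℝ) * Real.log (_root_.enorm (n - k)) =
      2 * ∑ k ∈ g.support.filter (fun k => 0 < g k),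
        (g k : ℝ) * Real.log (_root_.enorm (n - k)) := by
    rw [Finset.mul_sum]
    exact Finset.sum_congr rfl fun k _ => by ring
  have e2 : ∑ k ∈ g.support.filter (fun k => g k < 0),
      (-2) * (g k : ℝ) * Real.log (_root_.enorm (n - k)) =
      (-2) * ∑ k ∈ g.support.filter (fun k => g k < 0),
        (g k : ℝ) * Real.log (_root_.enorm (n - k)) := by
    rw [Finset.mul_sum]
    exact Finset.sum_congr rfl fun k _ => by ring
  rw [e1, e2]
  ring

lemma summable_T : Summable (fun n : Fin 2 → ℤ =>
    (1 + |(n 0 : ℝ)| + |(n 1 : ℝ)|) ^ (-(3:ℝ))) := by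
  have hnat : Summable (fun n : ℕ => (1 + (n : ℝ)) ^ (-(3/2) : ℝ)) := by
    have h := (Real.summable_one_div_nat_add_rpow 1 (3/2)).mpr (by norm_num)
    refine h.congr fun n => ?_
    rw [abs_of_nonneg (by positivity), Real.rpow_neg (by positivity), one_div, add_comm]
  have hf : Summable (fun a : ℤ => (1 + |(a : ℝ)|) ^ (-(3/2) : ℝ)) := by
    rw [summable_int_iff_summable_nat_and_neg]
    constructor
    · refine hnat.congr fun n => ?_
      rw [show (((n : ℤ)) : ℝ) = (n : ℝ) by push_cast; ring,
        abs_of_nonneg (Nat.cast_nonneg n)]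
    · refine hnat.congr fun n => ?_
      rw [show (((-n : ℤ)) : ℝ) = -(n : ℝ) by push_cast; ring, abs_neg,
        abs_of_nonneg (Nat.cast_nonneg n)]
  have hprod : Summable (fun p : ℤ × ℤ =>
      (1 + |(p.1 : ℝ)|) ^ (-(3/2) : ℝ) * (1 + |(p.2 : ℝ)|) ^ (-(3/2) : ℝ)) :=
    hf.mul_of_nonneg hf (fun a => Real.rpow_nonneg (by positivity) _)
      (fun a => Real.rpow_nonneg (by positivity) _)
  have hT : Summable (fun p : ℤ × ℤ => (1 + |(p.1 : ℝ)| + |(p.2 : ℝ)|) ^ (-(3:ℝ))) := by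
    refine Summable.of_nonneg_of_le (fun p => Real.rpow_nonneg (by positivity) _)
      (fun p => ?_) hprod
    set a := |(p.1 : ℝ)| with ha
    set b := |(p.2 : ℝ)| with hb
    have ha0 : 0 ≤ a := abs_nonneg _
    have hb0 : 0 ≤ b := abs_nonneg _
    rw [← Real.mul_rpow (by positivity) (by positivity)]
    rw [show (-(3:ℝ)) = 2 * (-(3/2)) by norm_num, Real.rpow_mul (by positivity)]
    apply Real.rpow_le_rpow_of_nonpos (by positivity) _ (by norm_num)
    rw [Real.rpow_two]
    nlinarith
  exact ((piFinTwoEquiv (fun _ : Fin 2 => ℤ)).symm.summable_iff).mp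
    (hT.congr fun p => by simp [piFinTwoEquiv])

end Stmt4Aux

open Stmt4Aux in
/-- If `g` has augmentation zero and the degree `m_g` of `P₊ - P₋` satisfies
`M_g - m_g ≥ 3`, where `M_g = 2∑_{g_k>0} g_k = deg P₊ = deg P₋`, then the
convolution of `g` with `ω₀ = 0`, `ωₙ = log ‖n‖` is absolutely summable. -/
theorem stmt4 (g : (Fin 2 → ℤ) →₀ ℤ)
    (hA : ∑ k ∈ g.support, g k = 0)
    (hdeg : (Pplus g - Pminus g).totalDegree + 3 ≤
      2 * ∑ k ∈ g.support.filter (fun k => 0 < g k), (g k).toNat) :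
    Summable (fun n : Fin 2 → ℤ =>
      |conv g (fun m => if m = 0 then 0 else Real.log (enorm m)) n|) := by
  classical
  set D : MvPolynomial (Fin 2) ℤ := Pplus g - Pminus g with hDdef
  set m : ℕ := D.totalDegree with hmdef
  set M : ℕ := 2 * ∑ k ∈ g.support.filter (fun k => 0 < g k), (g k).toNat with hMdef
  -- the sum of positive parts equals the sum of negative parts
  have hMeq : ∑ k ∈ g.support.filter (fun k => 0 < g k), (g k).toNat
      = ∑ k ∈ g.support.filter (fun k => g k < 0), (-g k).toNat := by
    have hsplit := Finset.sum_filter_add_sum_filter_not g.support (fun k => 0 < g k)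
      (fun k => g k)
    rw [filter_not_pos, hA] at hsplit
    have h1 : ((∑ k ∈ g.support.filter (fun k => 0 < g k), (g k).toNat : ℕ) : ℤ)
        = ∑ k ∈ g.support.filter (fun k => 0 < g k), g k := by
      push_cast
      exact Finset.sum_congr rfl fun k hk =>
        Int.toNat_of_nonneg (Finset.mem_filter.mp hk).2.le
    have h2 : ((∑ k ∈ g.support.filter (fun k => g k < 0), (-g k).toNat : ℕ) : ℤ)
        = -∑ k ∈ g.support.filter (fun k => g k < 0), g k := by
      push_cast
      rw [← Finset.sum_neg_distrib]
      exact Finset.sum_congr rfl fun k hk =>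
        Int.toNat_of_nonneg (by have := (Finset.mem_filter.mp hk).2; omega)
    have : ((∑ k ∈ g.support.filter (fun k => 0 < g k), (g k).toNat : ℕ) : ℤ)
        = ((∑ k ∈ g.support.filter (fun k => g k < 0), (-g k).toNat : ℕ) : ℤ) := by
      rw [h1, h2]; linarith
    exact_mod_cast this
  set B : ℝ := ∑ k ∈ g.support, _root_.enorm k with hBdef
  have hB : ∀ k ∈ g.support, _root_.enorm k ≤ B :=
    fun k hk => Finset.single_le_sum (fun j _ => enorm_nonneg j) hk
  have hB0 : 0 ≤ B := Finset.sum_nonneg fun j _ => enorm_nonneg j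
  set CD : ℝ := ∑ d ∈ D.support, |((coeff d D : ℤ) : ℝ)| with hCDdef
  have hCD0 : 0 ≤ CD := Finset.sum_nonneg fun d _ => abs_nonneg _
  set K : ℝ := 2 ^ M * CD with hKdef
  have hK0 : 0 ≤ K := by positivity
  set R : ℝ := 2 * B + 2 + 2 * K with hRdef
  have h2M : (0:ℝ) < 2 ^ M := by positivity
  -- main pointwise estimate
  have hclaim : ∀ n : Fin 2 → ℤ, R ≤ _root_.enorm n →
      |conv g (fun m => if m = 0 then 0 else Real.log (_root_.enorm m)) n| ≤ K / _root_.enorm n ^ 3 := by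
    intro n hn
    have h1 : 1 ≤ _root_.enorm n := by linarith
    have hq : ∀ k ∈ g.support, _root_.enorm n / 2 ≤ _root_.enorm (n - k) := by
      intro k hk
      have h2 := enorm_sub_ge n k
      have h3 := hB k hk
      linarith
    have hpos : ∀ k ∈ g.support, 0 < _root_.enorm (n - k) := by
      intro k hk
      have := hq k hk
      linarith
    rw [conv_eq g n hpos]
    set y : ℝ := ((eval n (Pminus g) : ℤ) : ℝ) with hydef
    set z : ℝ := ((eval n D : ℤ) : ℝ) with hzdef
    have hyz : ((eval n (Pplus g) : ℤ) : ℝ) = y + z := by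
      rw [hzdef, hydef, hDdef, map_sub]
      push_cast
      ring
    have hy_lb : (_root_.enorm n / 2) ^ M ≤ y := by
      calc (_root_.enorm n / 2) ^ M
          = ∏ k ∈ g.support.filter (fun k => g k < 0),
              (_root_.enorm n / 2) ^ (2 * (-g k).toNat) := by
            rw [Finset.prod_pow_eq_pow_sum, ← Finset.mul_sum, hMdef, hMeq]
        _ ≤ ∏ k ∈ g.support.filter (fun k => g k < 0),
              _root_.enorm (n - k) ^ (2 * (-g k).toNat) := by
            refine Finset.prod_le_prod (fun k _ => by positivity) (fun k hk => ?_)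
            exact pow_le_pow_left₀ (by positivity)
              (hq k (Finset.mem_filter.mp hk).1) _
        _ = y := by
            rw [hydef, eval_Pminus]
            exact Finset.prod_congr rfl fun k _ => by rw [← pow_mul]
    have hy_pos : 0 < y := lt_of_lt_of_le (by positivity) hy_lb
    have hy_lb' : _root_.enorm n ^ M / 2 ^ M ≤ y := by
      rw [← div_pow]; exact hy_lb
    have hz_le : |z| ≤ CD * _root_.enorm n ^ m := eval_abs_le D n h1
    have hen_pow : _root_.enorm n ^ m * _root_.enorm n ^ 3 ≤ _root_.enorm n ^ M := by
      rw [← pow_add]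
      exact pow_le_pow_right₀ h1 hdeg
    have he3 : 2 * K ≤ _root_.enorm n ^ 3 := by
      have h4 : _root_.enorm n ≤ _root_.enorm n ^ 3 := le_self_pow₀ h1 (by norm_num)
      linarith
    have hz_half : |z| ≤ y / 2 := by
      have hc : 2 * CD * _root_.enorm n ^ m ≤ y := by
        calc 2 * CD * _root_.enorm n ^ m = _root_.enorm n ^ m * (2 * K) / 2 ^ M := by
              rw [hKdef]; field_simp
          _ ≤ _root_.enorm n ^ m * _root_.enorm n ^ 3 / 2 ^ M := by gcongr
          _ ≤ _root_.enorm n ^ M / 2 ^ M := by gcongr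
          _ ≤ y := hy_lb'
      nlinarith [pow_nonneg (enorm_nonneg n) m]
    have hlog := abs_log_sub_log_le hy_pos hz_half
    rw [hyz]
    have hMy : _root_.enorm n ^ M ≤ 2 ^ M * y := by
      rw [div_le_iff₀ h2M] at hy_lb'
      linarith
    calc |(Real.log (y + z) - Real.log y) / 2|
        = |Real.log (y + z) - Real.log y| / 2 := by
          rw [abs_div]; norm_num
      _ ≤ (2 * |z| / y) / 2 := by gcongr
      _ = |z| / y := by ring
      _ ≤ K / _root_.enorm n ^ 3 := by
          rw [div_le_div_iff₀ hy_pos (by positivity)]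
          have t1 : |z| * _root_.enorm n ^ 3 ≤ CD * _root_.enorm n ^ m * _root_.enorm n ^ 3 := by
            apply mul_le_mul_of_nonneg_right hz_le (by positivity)
          have t2 : CD * (_root_.enorm n ^ m * _root_.enorm n ^ 3) ≤ CD * _root_.enorm n ^ M :=
            mul_le_mul_of_nonneg_left hen_pow hCD0
          have t3 : CD * _root_.enorm n ^ M ≤ CD * (2 ^ M * y) :=
            mul_le_mul_of_nonneg_left hMy hCD0
          rw [hKdef]
          nlinarith
  -- finiteness of the small ball
  have hfin : {n : Fin 2 → ℤ | _root_.enorm n < R}.Finite := by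
    apply Set.Finite.subset (Set.finite_Icc (fun _ : Fin 2 => (-⌈R⌉ : ℤ)) (fun _ => ⌈R⌉))
    intro n hn
    simp only [Set.mem_setOf_eq] at hn
    simp only [Set.mem_Icc, Pi.le_def]
    have key : ∀ i, -⌈R⌉ ≤ n i ∧ n i ≤ ⌈R⌉ := by
      intro i
      have habs := abs_le_enorm n i
      have h2 : |((n i : ℤ) : ℝ)| ≤ (⌈R⌉ : ℝ) :=
        le_trans (le_of_lt (lt_of_le_of_lt habs hn)) (Int.le_ceil R)
      have h3 : |n i| ≤ ⌈R⌉ := by exact_mod_cast h2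
      exact abs_le.mp h3
    exact ⟨fun i => (key i).1, fun i => (key i).2⟩
  have hev : ∀ᶠ n in Filter.cofinite, R ≤ _root_.enorm n := by
    filter_upwards [hfin.eventually_cofinite_notMem] with n hn
    simpa [not_lt] using hn
  apply Summable.of_norm_bounded_eventually
    (g := fun n : Fin 2 → ℤ => (27 * K) * (1 + |(n 0 : ℝ)| + |(n 1 : ℝ)|) ^ (-(3:ℝ)))
    (summable_T.mul_left _)
  filter_upwards [hev] with n hn
  rw [Real.norm_eq_abs, abs_abs]
  refine (hclaim n hn).trans ?_
  -- K / _root_.enorm n ^ 3 ≤ 27 K (1+|n0|+|n1|)^(-3)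
  have h1 : 1 ≤ _root_.enorm n := by linarith
  have ha := abs_le_enorm n 0
  have hb := abs_le_enorm n 1
  have hsum : 1 + |(n 0 : ℝ)| + |(n 1 : ℝ)| ≤ 3 * _root_.enorm n := by linarith
  have hp1 : (0:ℝ) < 1 + |(n 0 : ℝ)| + |(n 1 : ℝ)| := by positivity
  have hcube : (1 + |(n 0 : ℝ)| + |(n 1 : ℝ)|) ^ 3 ≤ 27 * _root_.enorm n ^ 3 := by
    calc (1 + |(n 0 : ℝ)| + |(n 1 : ℝ)|) ^ 3 ≤ (3 * _root_.enorm n) ^ 3 :=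
          pow_le_pow_left₀ hp1.le hsum 3
      _ = 27 * _root_.enorm n ^ 3 := by ring
  have hrw : (1 + |(n 0 : ℝ)| + |(n 1 : ℝ)|) ^ (-(3:ℝ)) =
      ((1 + |(n 0 : ℝ)| + |(n 1 : ℝ)|) ^ 3)⁻¹ := by
    rw [Real.rpow_neg hp1.le, ← Real.rpow_natCast _ 3]
    norm_num
  rw [hrw, ← div_eq_mul_inv]
  rw [div_le_div_iff₀ (by positivity) (by positivity)]
  nlinarith [mul_le_mul_of_nonneg_left hcube hK0]
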